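/- Let ε > 0 and let z₁,…,z_k be linearly independent vectors in ℝᵐ with |z_i| ≤ 1 for all i, whose Gram–Schmidt orthogonalization z₁* = z₁, z₂*, …, z_k* satisfies |z_j*| ≥ ε for all j. Let δ ≥ 0 with δ·(1 + 1/ε)^k < 1, and let z₁'',…,z_k'' ∈ ℝᵐ satisfy |z_i''| ≤ δ for all i. Then the perturbed vectors z₁ − z₁'', …, z_k − z_k'' are linearly independent. -/

import Mathlib

/-!
Write `v = ∑ cᵢ zᵢ`. Pairing `v` with the last Gram–Schmidt vector `z_a*` kills every earlier
`zᵢ` and gives `cₐ ‖z_a*‖² = ⟪z_a*, v⟫`, so `‖cₐ‖ ≤ ‖v‖ / ε`; removing `cₐ zₐ` from `v` multiplies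
its norm by at most `1 + 1/ε`. Peeling off the coefficients one by one yields
`∑ ‖cᵢ‖ ≤ ((1 + 1/ε)^k - 1) ‖v‖`. If `∑ cᵢ (zᵢ - zᵢ'') = 0`, then `‖v‖ = ‖∑ cᵢ zᵢ''‖ ≤ δ ∑ ‖cᵢ‖`,
which together with `δ (1 + 1/ε)^k < 1` forces `v = 0` and then `c = 0`.
-/

open Finset

namespace InnerProductSpace

variable {𝕜 E ι : Type*} [RCLike 𝕜] [NormedAddCommGroup E] [InnerProductSpace 𝕜 E]
  [LinearOrder ι] [LocallyFiniteOrderBot ι] [WellFoundedLT ι]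

local notation "⟪" x ", " y "⟫" => inner 𝕜 x y

theorem inner_gramSchmidt_apply_self (f : ι → E) (a : ι) :
    ⟪gramSchmidt 𝕜 f a, f a⟫ = ⟪gramSchmidt 𝕜 f a, gramSchmidt 𝕜 f a⟫ := by
  conv_lhs => rw [gramSchmidt_def'' 𝕜 f a]
  rw [inner_add_right, inner_sum, add_eq_left]
  refine sum_eq_zero fun i hi => ?_
  rw [inner_smul_right, gramSchmidt_orthogonal 𝕜 f (mem_Iio.1 hi).ne', mul_zero]

theorem inner_gramSchmidt_smul_add_sum {f : ι → E} {a : ι} {s : Finset ι}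
    (hs : ∀ i ∈ s, i < a) (c : ι → 𝕜) :
    ⟪gramSchmidt 𝕜 f a, c a • f a + ∑ i ∈ s, c i • f i⟫ =
      c a * ⟪gramSchmidt 𝕜 f a, gramSchmidt 𝕜 f a⟫ := by
  rw [inner_add_right, inner_smul_right, inner_gramSchmidt_apply_self, inner_sum, add_eq_left]
  refine sum_eq_zero fun i hi => ?_
  rw [inner_smul_right, gramSchmidt_inv_triangular 𝕜 f (hs i hi), mul_zero]

theorem norm_gramSchmidt_mul_norm_le {f : ι → E} {a : ι} {s : Finset ι}
    (hs : ∀ i ∈ s, i < a) (c : ι → 𝕜) :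
    ‖gramSchmidt 𝕜 f a‖ * ‖c a‖ ≤ ‖c a • f a + ∑ i ∈ s, c i • f i‖ := by
  set g := gramSchmidt 𝕜 f a
  rcases (norm_nonneg g).eq_or_lt with hg | hg
  · rw [← hg, zero_mul]
    exact norm_nonneg _
  refine le_of_mul_le_mul_left ?_ hg
  calc ‖g‖ * (‖g‖ * ‖c a‖) = ‖⟪g, c a • f a + ∑ i ∈ s, c i • f i⟫‖ := by
        rw [inner_gramSchmidt_smul_add_sum hs, norm_mul, inner_self_eq_norm_sq_to_K, norm_pow,
          RCLike.norm_ofReal, abs_norm]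
        ring
    _ ≤ ‖g‖ * ‖c a • f a + ∑ i ∈ s, c i • f i‖ := norm_inner_le_norm _ _

theorem sum_norm_le_mul_norm_sum_of_le_norm_gramSchmidt {f : ι → E} {ε : ℝ} (hε : 0 < ε)
    (hf : ∀ i, ‖f i‖ ≤ 1) (hg : ∀ i, ε ≤ ‖gramSchmidt 𝕜 f i‖) (s : Finset ι) (c : ι → 𝕜) :
    ∑ i ∈ s, ‖c i‖ ≤ ((1 + 1 / ε) ^ #s - 1) * ‖∑ i ∈ s, c i • f i‖ := by
  induction s using Finset.induction_on_max with
  | empty => simp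
  | insert a t hlt ih =>
    have ha : a ∉ t := fun h => lt_irrefl a (hlt a h)
    rw [sum_insert ha, sum_insert ha, card_insert_of_notMem ha, pow_succ]
    set v := c a • f a + ∑ i ∈ t, c i • f i
    have hca : ‖c a‖ ≤ ‖v‖ / ε := by
      rw [le_div_iff₀' hε]
      exact (mul_le_mul_of_nonneg_right (hg a) (norm_nonneg _)).trans
        (norm_gramSchmidt_mul_norm_le hlt c)
    have hrest : ‖∑ i ∈ t, c i • f i‖ ≤ (1 + 1 / ε) * ‖v‖ :=
      calc ‖∑ i ∈ t, c i • f i‖ = ‖v - c a • f a‖ := by rw [add_sub_cancel_left]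
        _ ≤ ‖v‖ + ‖c a‖ * ‖f a‖ := (norm_sub_le _ _).trans_eq (by rw [norm_smul])
        _ ≤ ‖v‖ + ‖v‖ / ε := by
          gcongr
          exact (mul_le_of_le_one_right (norm_nonneg _) (hf a)).trans hca
        _ = (1 + 1 / ε) * ‖v‖ := by ring
    have hpow : 0 ≤ (1 + 1 / ε) ^ #t - 1 :=
      sub_nonneg.2 (one_le_pow₀ (le_add_of_nonneg_right (by positivity)))
    calc ‖c a‖ + ∑ i ∈ t, ‖c i‖
        ≤ ‖v‖ / ε + ((1 + 1 / ε) ^ #t - 1) * ((1 + 1 / ε) * ‖v‖) :=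
          add_le_add hca (ih.trans (mul_le_mul_of_nonneg_left hrest hpow))
      _ = ((1 + 1 / ε) ^ #t * (1 + 1 / ε) - 1) * ‖v‖ := by ring

end InnerProductSpace

theorem linearIndependent_sub_of_sum_norm_le_mul_norm_sum {𝕜 E ι : Type*} [RCLike 𝕜]
    [NormedAddCommGroup E] [NormedSpace 𝕜 E] [Fintype ι] {z w : ι → E} {C δ : ℝ}
    (hz : ∀ c : ι → 𝕜, ∑ i, ‖c i‖ ≤ C * ‖∑ i, c i • z i‖) (hw : ∀ i, ‖w i‖ ≤ δ)
    (hδ : 0 ≤ δ) (hδC : δ * C < 1) :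
    LinearIndependent 𝕜 (fun i => z i - w i) := by
  rw [Fintype.linearIndependent_iff]
  intro c hc
  simp only [smul_sub, sum_sub_distrib, sub_eq_zero] at hc
  have hsmall : ‖∑ i, c i • z i‖ ≤ δ * C * ‖∑ i, c i • z i‖ :=
    calc ‖∑ i, c i • z i‖ = ‖∑ i, c i • w i‖ := by rw [hc]
      _ ≤ ∑ i, ‖c i‖ * δ := by
        refine (norm_sum_le _ _).trans (sum_le_sum fun i _ => ?_)
        rw [norm_smul]
        exact mul_le_mul_of_nonneg_left (hw i) (norm_nonneg _)
      _ = δ * ∑ i, ‖c i‖ := by rw [← sum_mul, mul_comm]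
      _ ≤ δ * C * ‖∑ i, c i • z i‖ := by rw [mul_assoc]; exact mul_le_mul_of_nonneg_left (hz c) hδ
  have hzero : ‖∑ i, c i • z i‖ = 0 := by nlinarith [norm_nonneg (∑ i, c i • z i)]
  have hsum : ∑ i, ‖c i‖ = 0 :=
    le_antisymm (by simpa [hzero] using hz c) (sum_nonneg fun i _ => norm_nonneg _)
  intro i
  exact norm_eq_zero.1 ((sum_eq_zero_iff_of_nonneg fun i _ => norm_nonneg _).1 hsum i (mem_univ i))

theorem stmt12 {m k : ℕ} (ε : ℝ) (hε : 0 < ε) (z : Fin k → EuclideanSpace ℝ (Fin m))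
    (hnorm : ∀ i, ‖z i‖ ≤ 1)
    (hgs : ∀ j : Fin k,
      ε ≤ ‖@InnerProductSpace.gramSchmidt ℝ _ _ _ _ (Fin k) _ _ (inferInstanceAs (WellFoundedLT (Fin k))) z j‖)
    (δ : ℝ) (hδ0 : 0 ≤ δ) (hδ : δ * (1 + 1 / ε) ^ k < 1)
    (z'' : Fin k → EuclideanSpace ℝ (Fin m)) (hz'' : ∀ i, ‖z'' i‖ ≤ δ) :
    LinearIndependent ℝ (fun i => z i - z'' i) := by
  refine linearIndependent_sub_of_sum_norm_le_mul_norm_sum (C := (1 + 1 / ε) ^ k - 1)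
    (fun c => ?_) hz'' hδ0 (by linarith)
  simpa using
    InnerProductSpace.sum_norm_le_mul_norm_sum_of_le_norm_gramSchmidt hε hnorm hgs univ c
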